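/- Every graph with no isolated vertices has a minimum dominating set that is open irredundant. -/

import Mathlib

open SimpleGraph

variable {V : Type*}

/-- Closed neighborhood of a vertex. -/
def closedNbhd (G : SimpleGraph V) (v : V) : Set V := insert v (G.neighborSet v)

/-- Closed neighborhood of a set of vertices. -/
def closedNbhdSet (G : SimpleGraph V) (A : Set V) : Set V := ⋃ a ∈ A, closedNbhd G a

/-- `D` is a dominating set of `G`. -/
def IsDomSet (G : SimpleGraph V) (D : Set V) : Prop :=
  ∀ v, ∃ u ∈ D, v ∈ closedNbhd G u

/-- `D` is a minimal dominating set of `G`. -/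
def IsMinimalDomSet (G : SimpleGraph V) (D : Set V) : Prop :=
  IsDomSet G D ∧ ∀ D' ⊆ D, IsDomSet G D' → D' = D

/-- The domination number `γ`. -/
noncomputable def domNum (G : SimpleGraph V) : ℕ :=
  sInf {n | ∃ D : Set V, IsDomSet G D ∧ D.ncard = n}

/-- The upper domination number `Γ`. -/
noncomputable def upperDomNum (G : SimpleGraph V) : ℕ :=
  sSup {n | ∃ D : Set V, IsMinimalDomSet G D ∧ D.ncard = n}

/-- A graph is well-dominated if `γ = Γ`. -/
def WellDominated (G : SimpleGraph V) : Prop := domNum G = upperDomNum G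

/-- `A` is an independent set of `G`. -/
def IsIndep (G : SimpleGraph V) (A : Set V) : Prop :=
  ∀ u ∈ A, ∀ v ∈ A, ¬ G.Adj u v

/-- `A` is a maximal independent set of `G`. -/
def IsMaxIndep (G : SimpleGraph V) (A : Set V) : Prop :=
  IsIndep G A ∧ ∀ B, IsIndep G B → A ⊆ B → B = A

/-- The independence number `α`. -/
noncomputable def indepNum (G : SimpleGraph V) : ℕ :=
  sSup {n | ∃ A : Set V, IsIndep G A ∧ A.ncard = n}

/-- The strong product of two graphs. -/
def strongProd {α β : Type*} (G : SimpleGraph α) (H : SimpleGraph β) :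
    SimpleGraph (α × β) where
  Adj x y := x ≠ y ∧ (x.1 = y.1 ∨ G.Adj x.1 y.1) ∧ (x.2 = y.2 ∨ H.Adj x.2 y.2)
  symm := by
    constructor
    rintro x y ⟨h1, h2, h3⟩
    refine ⟨h1.symm, ?_, ?_⟩
    · cases h2 with
      | inl h => exact Or.inl h.symm
      | inr h => exact Or.inr h.symm
    · cases h3 with
      | inl h => exact Or.inl h.symm
      | inr h => exact Or.inr h.symm
  loopless := by constructor; rintro x ⟨h1, _⟩; exact h1 rfl

/-- The direct (tensor) product of two graphs. -/
def tensorProd {α β : Type*} (G : SimpleGraph α) (H : SimpleGraph β) :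
    SimpleGraph (α × β) where
  Adj x y := G.Adj x.1 y.1 ∧ H.Adj x.2 y.2
  symm := ⟨fun _ _ h => ⟨h.1.symm, h.2.symm⟩⟩
  loopless := ⟨fun _ h => h.1.ne rfl⟩

/-- The corona `G ⊙ K₁`. -/
def corona {α : Type*} (G : SimpleGraph α) : SimpleGraph (α ⊕ α) :=
  SimpleGraph.fromRel (fun x y =>
    match x, y with
    | Sum.inl u, Sum.inl v => G.Adj u v
    | Sum.inl u, Sum.inr v => u = v
    | _, _ => False)

/-- The private neighborhood `pn[u,D] = N[u] - N[D - {u}]`. -/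
def privateNbhd (G : SimpleGraph V) (D : Set V) (u : V) : Set V :=
  {x | x ∈ closedNbhd G u ∧ ∀ d ∈ D, d ≠ u → x ∉ closedNbhd G d}

/-- A set `D` is open irredundant if every vertex of `D` has an external
private neighbor. -/
def IsOpenIrred (G : SimpleGraph V) (D : Set V) : Prop :=
  ∀ u ∈ D, ∃ x ∈ G.neighborSet u, ∀ d ∈ D, d ≠ u → x ∉ closedNbhd G d

/-!
Among the minimum dominating sets choose one, `D`, with the fewest vertices isolated in `G[D]`.
If some `u ∈ D` had no external private neighbour, every neighbour of `u` would be dominated by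
`D \ {u}`. Then `u` has no neighbour in `D` (otherwise `D \ {u}` would dominate), and swapping `u`
for any neighbour `v` yields a minimum dominating set in which `v` is not isolated and `u` is
gone, so it has fewer isolated vertices.
-/

variable {G : SimpleGraph V} {D : Set V} {u : V}

def isolatedIn (G : SimpleGraph V) (D : Set V) : Set V :=
  {w | w ∈ D ∧ ∀ d ∈ D, ¬ G.Adj w d}

lemma domNum_le_ncard (hD : IsDomSet G D) : domNum G ≤ D.ncard :=
  Nat.sInf_le ⟨D, hD, rfl⟩

lemma isDomSet_univ : IsDomSet G Set.univ :=
  fun v => ⟨v, Set.mem_univ v, Set.mem_insert v _⟩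

lemma exists_isDomSet_ncard_eq_domNum : ∃ D : Set V, IsDomSet G D ∧ D.ncard = domNum G :=
  Nat.sInf_mem (s := {n | ∃ D : Set V, IsDomSet G D ∧ D.ncard = n}) ⟨_, _, isDomSet_univ, rfl⟩

lemma IsDomSet.insert_diff_singleton (hD : IsDomSet G D)
    (hnbr : ∀ x ∈ G.neighborSet u, ∃ d ∈ D, d ≠ u ∧ x ∈ closedNbhd G d) {w : V}
    (huw : G.Adj u w) : IsDomSet G (insert w (D \ {u})) := by
  intro x
  obtain ⟨d, hd, hxd⟩ := hD x
  by_cases hdu : d = u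
  · subst hdu
    rcases hxd with rfl | hx
    · exact ⟨w, Set.mem_insert w _, Or.inr huw.symm⟩
    · obtain ⟨d', hd', hd'u, hxd'⟩ := hnbr x hx
      exact ⟨d', Set.mem_insert_of_mem _ ⟨hd', hd'u⟩, hxd'⟩
  · exact ⟨d, Set.mem_insert_of_mem _ ⟨hd, hdu⟩, hxd⟩

lemma not_adj_of_ncard_eq_domNum [Finite V] (hD : IsDomSet G D) (hcard : D.ncard = domNum G)
    (hu : u ∈ D) (hnbr : ∀ x ∈ G.neighborSet u, ∃ d ∈ D, d ≠ u ∧ x ∈ closedNbhd G d) :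
    ∀ w ∈ D, ¬ G.Adj u w := by
  intro w hw huw
  have hdiff : insert w (D \ {u}) = D \ {u} := Set.insert_eq_of_mem ⟨hw, huw.ne.symm⟩
  have hle := domNum_le_ncard (hD.insert_diff_singleton hnbr huw)
  rw [hdiff, Set.ncard_sdiff_singleton_of_mem hu] at hle
  have hpos : 0 < D.ncard := (Set.ncard_pos (Set.toFinite D)).2 ⟨u, hu⟩
  omega

lemma isolatedIn_insert_diff_singleton_ssubset (hu : u ∈ D) (hnoadj : ∀ w ∈ D, ¬ G.Adj u w)
    {v : V} (hv : v ∉ D) {d₀ : V} (hd₀ : d₀ ∈ D) (hd₀u : d₀ ≠ u) (hd₀v : G.Adj d₀ v) :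
    isolatedIn G (insert v (D \ {u})) ⊂ isolatedIn G D := by
  refine Set.ssubset_iff_of_subset ?_ |>.2 ⟨u, ⟨hu, hnoadj⟩, fun hu' => ?_⟩
  · rintro w ⟨rfl | ⟨hwD, -⟩, hwiso⟩
    · exact absurd hd₀v.symm (hwiso d₀ (Set.mem_insert_of_mem _ ⟨hd₀, hd₀u⟩))
    refine ⟨hwD, fun d hd hwd => ?_⟩
    by_cases hdu : d = u
    · exact hnoadj w hwD (hdu ▸ hwd).symm
    · exact hwiso d (Set.mem_insert_of_mem _ ⟨hd, hdu⟩) hwd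
  · rcases hu'.1 with rfl | ⟨-, huu⟩
    · exact hv hu
    · exact huu rfl

/-- Every finite graph with no isolated vertices has an open irredundant
minimum dominating set. -/
theorem stmt_12 {V : Type*} [Fintype V] (G : SimpleGraph V)
    (h : ∀ v : V, ∃ u, G.Adj v u) :
    ∃ D : Set V, IsDomSet G D ∧ D.ncard = domNum G ∧ IsOpenIrred G D := by
  obtain ⟨D, ⟨hD, hcard⟩, hmin⟩ := Set.exists_min_image
    {D : Set V | IsDomSet G D ∧ D.ncard = domNum G} (fun D => (isolatedIn G D).ncard)
    (Set.toFinite _) exists_isDomSet_ncard_eq_domNum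
  refine ⟨D, hD, hcard, fun u hu => ?_⟩
  by_contra! hnbr
  have hnoadj := not_adj_of_ncard_eq_domNum hD hcard hu hnbr
  obtain ⟨v, huv⟩ := h u
  have hv : v ∉ D := fun hvD => hnoadj v hvD huv
  obtain ⟨d₀, hd₀, hd₀u, hvd₀ | hd₀v⟩ := hnbr v huv
  · exact hv (hvd₀ ▸ hd₀)
  have hfewer := Set.ncard_lt_ncard
    (isolatedIn_insert_diff_singleton_ssubset hu hnoadj hv hd₀ hd₀u hd₀v)
  exact hfewer.not_ge <| hmin _
    ⟨hD.insert_diff_singleton hnbr huv, (Set.ncard_exchange hv hu).trans hcard⟩
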